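/- Let f be convex on an interval I, x₁,...,xₙ ∈ I, and p a probability vector with pᵢ ≥ 0, ∑pᵢ = 1. Then min_i pᵢ · [∑f(xᵢ) − n·f((∑xᵢ)/n)] ≤ ∑pᵢf(xᵢ) − f(∑pᵢxᵢ) ≤ max_i pᵢ · [∑f(xᵢ) − n·f((∑xᵢ)/n)]. -/

import Mathlib

/-!
Write `J(w) = ∑ wᵢ f(xᵢ) - f(∑ wᵢ xᵢ)` for the Jensen gap of probability weights `w`. If `q`, `r`
are probability weights and `c ≥ 0` with `c qᵢ ≤ rᵢ`, then `r = c q + (r - c q)` with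
`r - c q ≥ 0`, and Jensen's inequality for the points `∑ qᵢ xᵢ` and `xᵢ` with weights `c` and
`rᵢ - c qᵢ` gives `c J(q) ≤ J(r)`. The two bounds are the cases `(q, r, c) = (u, p, n pmin)` and
`(p, u, (n pmax)⁻¹)`, where `u` is the uniform weight and `n J(u) = ∑ f(xᵢ) - n f(x̄)`.
-/

open Finset

theorem Finset.sum_smul_eq_smul_sum_smul_add {ι R M : Type*} [Ring R] [AddCommGroup M]
    [Module R M] (t : Finset ι) (c : R) (q r : ι → R) (z : ι → M) :
    ∑ i ∈ t, r i • z i = c • ∑ i ∈ t, q i • z i + ∑ i ∈ t, (r i - c * q i) • z i := by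
  simp only [sub_smul, mul_smul, sum_sub_distrib, smul_sum, add_sub_cancel]

section JensenGap

variable {𝕜 E β ι : Type*} [Field 𝕜] [LinearOrder 𝕜] [IsStrictOrderedRing 𝕜]
  [AddCommGroup E] [Module 𝕜 E] [AddCommGroup β] [PartialOrder β] [IsOrderedAddMonoid β]
  [Module 𝕜 β] [IsStrictOrderedModule 𝕜 β] [Fintype ι]

def jensenGap (f : E → β) (w : ι → 𝕜) (x : ι → E) : β :=
  ∑ i, w i • f (x i) - f (∑ i, w i • x i)

theorem ConvexOn.map_smul_add_sum_le {s : Set E} {f : E → β} (hf : ConvexOn 𝕜 s f)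
    {a : 𝕜} {w : ι → 𝕜} (ha : 0 ≤ a) (hw : ∀ i, 0 ≤ w i) (h₁ : a + ∑ i, w i = 1)
    {y : E} {x : ι → E} (hy : y ∈ s) (hx : ∀ i, x i ∈ s) :
    f (a • y + ∑ i, w i • x i) ≤ a • f y + ∑ i, w i • f (x i) := by
  have := hf.map_sum_le (t := univ) (w := fun o : Option ι => o.elim a w)
    (p := fun o => o.elim y x) (by rintro (_ | i) - <;> simp [ha, hw])
    (by simpa [Fintype.sum_option] using h₁) (by rintro (_ | i) - <;> simp [hy, hx])
  simpa [Fintype.sum_option] using this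

theorem ConvexOn.smul_jensenGap_le {s : Set E} {f : E → β} (hf : ConvexOn 𝕜 s f)
    {q r : ι → 𝕜} {c : 𝕜} (hq : ∀ i, 0 ≤ q i) (hq₁ : ∑ i, q i = 1) (hr₁ : ∑ i, r i = 1)
    (hc : 0 ≤ c) (hcqr : ∀ i, c * q i ≤ r i) {x : ι → E} (hx : ∀ i, x i ∈ s) :
    c • jensenGap f q x ≤ jensenGap f r x := by
  have hy : ∑ i, q i • x i ∈ s := hf.1.sum_mem (fun i _ => hq i) hq₁ (fun i _ => hx i)
  have hJ := hf.map_smul_add_sum_le hc (fun i => sub_nonneg.2 (hcqr i))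
    (by rw [sum_sub_distrib, ← mul_sum, hq₁, hr₁, mul_one, add_sub_cancel]) hy hx
  rw [← sum_smul_eq_smul_sum_smul_add univ c q r x] at hJ
  calc c • jensenGap f q x
      = (c • ∑ i, q i • f (x i) + ∑ i, (r i - c * q i) • f (x i))
        - (c • f (∑ i, q i • x i) + ∑ i, (r i - c * q i) • f (x i)) := by
        rw [jensenGap, smul_sub]; abel
    _ ≤ jensenGap f r x := by
        rw [jensenGap, sum_smul_eq_smul_sum_smul_add univ c q r (fun i => f (x i))]
        exact sub_le_sub_left hJ _

end JensenGap

theorem mul_jensenGap_uniform {ι : Type*} [Fintype ι] (f : ℝ → ℝ) (x : ι → ℝ)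
    (hι : (Fintype.card ι : ℝ) ≠ 0) :
    Fintype.card ι * jensenGap f (fun _ => (Fintype.card ι : ℝ)⁻¹) x =
      ∑ i, f (x i) - Fintype.card ι * f ((∑ i, x i) / Fintype.card ι) := by
  rw [jensenGap, mul_sub]
  simp only [smul_eq_mul, ← mul_sum]
  rw [mul_inv_cancel_left₀ hι, inv_mul_eq_div]

theorem stmt4 {I : Set ℝ} {f : ℝ → ℝ} (hf : ConvexOn ℝ I f)
    {n : ℕ} (hn : 0 < n) (x : Fin n → ℝ) (hx : ∀ i, x i ∈ I)
    (p : Fin n → ℝ) (hp : ∀ i, 0 ≤ p i) (hp1 : ∑ i, p i = 1)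
    (pmin pmax : ℝ) (hmin : IsLeast (Set.range p) pmin)
    (hmax : IsGreatest (Set.range p) pmax) :
    pmin * (∑ i, f (x i) - n * f ((∑ i, x i) / n)) ≤
      ∑ i, p i * f (x i) - f (∑ i, p i * x i) ∧
    ∑ i, p i * f (x i) - f (∑ i, p i * x i) ≤
      pmax * (∑ i, f (x i) - n * f ((∑ i, x i) / n)) := by
  have hn₀ : (n : ℝ) ≠ 0 := Nat.cast_ne_zero.2 hn.ne'
  have huniform := mul_jensenGap_uniform f x (by simpa using hn₀)
  simp only [Fintype.card_fin] at huniform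
  change pmin * _ ≤ jensenGap f p x ∧ jensenGap f p x ≤ pmax * _
  rw [← huniform]
  have hu₁ : ∑ _ : Fin n, (n : ℝ)⁻¹ = 1 := by simp [hn₀]
  have hpmin : 0 ≤ pmin := by
    obtain ⟨i, rfl⟩ := hmin.1
    exact hp i
  have hpmax : 1 ≤ n * pmax := by
    simpa [hp1] using Finset.sum_le_card_nsmul univ p pmax fun i _ => hmax.2 ⟨i, rfl⟩
  have hpmax₀ : 0 < n * pmax := one_pos.trans_le hpmax
  have hpmax_ne : pmax ≠ 0 := right_ne_zero_of_mul hpmax₀.ne'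
  have hlower : (n * pmin) • jensenGap f (fun _ => (n : ℝ)⁻¹) x ≤ jensenGap f p x :=
    hf.smul_jensenGap_le (fun _ => by positivity) hu₁ hp1 (by positivity) (fun i => by
      rw [mul_right_comm, mul_inv_cancel₀ hn₀, one_mul]; exact hmin.2 ⟨i, rfl⟩) hx
  have hupper : (n * pmax)⁻¹ • jensenGap f p x ≤ jensenGap f (fun _ => (n : ℝ)⁻¹) x :=
    hf.smul_jensenGap_le hp hp1 hu₁ (by positivity) (fun i => calc
      (n * pmax)⁻¹ * p i ≤ (n * pmax)⁻¹ * pmax := by gcongr; exact hmax.2 ⟨i, rfl⟩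
      _ = (n : ℝ)⁻¹ := by rw [mul_inv, inv_mul_cancel_right₀ hpmax_ne]) hx
  rw [smul_eq_mul] at hlower hupper
  rw [inv_mul_le_iff₀ hpmax₀] at hupper
  exact ⟨by linear_combination hlower, by linear_combination hupper⟩
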